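/- Let a, b, c ∈ ℝ with b ≠ 0, a ≠ 2b and Δ > 0. Then 2bΔ + c√Δ ≠ 0 and 2bΔ − c√Δ ≠ 0. -/

import Mathlib

noncomputable section

/-- `Δ = (c/(2b))² − a/b + 2`. -/
def disc (a b c : ℝ) : ℝ := (c / (2 * b)) ^ 2 - a / b + 2

/-- The cubic `f₁(z) = b z³ − c z² + (a − 2b) z`. -/
def cubicF (a b c z : ℝ) : ℝ := b * z ^ 3 - c * z ^ 2 + (a - 2 * b) * z

/-- `β₂(z) = 2b z² − c z + (a − b)`. -/
def beta2 (a b c z : ℝ) : ℝ := 2 * b * z ^ 2 - c * z + (a - b)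

/-- `β₃(z) = −3b z² + 2c z + (2b − a)`. -/
def beta3 (a b c z : ℝ) : ℝ := -3 * b * z ^ 2 + 2 * c * z + (2 * b - a)

/- The two eigenvalues multiply to `Δ (4b²Δ − c²) = 4bΔ(2b − a)`, which vanishes only if
`Δ = 0`, `b = 0` or `a = 2b`. -/

theorem four_mul_sq_mul_disc (a : ℝ) {b : ℝ} (c : ℝ) (hb : b ≠ 0) :
    4 * b ^ 2 * disc a b c = c ^ 2 + 4 * b * (2 * b - a) := by
  unfold disc
  field_simp
  ring

theorem add_sqrt_disc_mul_sub_sqrt_disc {a b c : ℝ} (hb : b ≠ 0) (hΔ : 0 ≤ disc a b c) :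
    (2 * b * disc a b c + c * Real.sqrt (disc a b c)) *
      (2 * b * disc a b c - c * Real.sqrt (disc a b c)) =
      4 * b * (2 * b - a) * disc a b c := by
  have hsq : Real.sqrt (disc a b c) ^ 2 = disc a b c := Real.sq_sqrt hΔ
  linear_combination disc a b c * four_mul_sq_mul_disc a c hb - c ^ 2 * hsq

theorem stmt7 (a b c : ℝ) (hb : b ≠ 0) (ha : a ≠ 2 * b) (hΔ : 0 < disc a b c) :
    2 * b * disc a b c + c * Real.sqrt (disc a b c) ≠ 0 ∧
    2 * b * disc a b c - c * Real.sqrt (disc a b c) ≠ 0 := by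
  have hprod : 4 * b * (2 * b - a) * disc a b c ≠ 0 :=
    mul_ne_zero (mul_ne_zero (mul_ne_zero four_ne_zero hb) (sub_ne_zero.2 ha.symm)) hΔ.ne'
  rw [← add_sqrt_disc_mul_sub_sqrt_disc hb hΔ.le] at hprod
  exact mul_ne_zero_iff.1 hprod
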